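/- Let d ≥ 2, let u ∈ [0,1]^d with u_i ≤ u_j whenever i ≤ j, let C be a d-copula and π ∈ S_d. Let i_1 < i_2 < ⋯ < i_p be exactly those indices i ∈ {1,…,d} with π(i) ≠ i (assume p ≥ 2). Then |C(u) − C(u_π)| ≤ Σ_{k = ⌈p/2⌉+1}^{p} (u_{i_k} − u_{i_1}). -/

import Mathlib

/-!
With `v = u ⊓ (u ∘ π)`, monotonicity of `C` and its `1`-Lipschitz property for the `ℓ¹` distance
(both read off from the `d`-increasing property on boxes whose lower corner vanishes outside one
or two coordinates) give `|C u - C (u ∘ π)| ≤ ∑ᵢ (u i - u (π i))⁺`. Only non-fixed points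
contribute; relabelled increasingly as `0, …, p-1`, this is `∑ₖ (x k - x (σ k))⁺` for a monotone
`x` and a permutation `σ` of `Fin p`. Dropping the negative term bounds it by the sum of the
nonnegative, monotone `f = x - x 0` over `{k | x (σ k) < x k}`; since the sums of `(x k - x (σ k))⁺`
and `(x (σ k) - x k)⁺` agree, it is also bounded by the sum of `f` over the image under `σ` of
`{k | x k < x (σ k)}`. One of these two sets has at most `⌊p/2⌋` elements, and the sum of `f` over
at most `⌊p/2⌋` indices is at most its sum over the top `⌊p/2⌋` indices.
-/

/-- A `d`-copula: a function `C : [0,1]^d → ℝ` (defined on all of `(Fin d → ℝ)`,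
with the copula conditions imposed on `[0,1]^d`) that is grounded, has uniform
one-dimensional margins, and is `d`-increasing. -/
def IsCopula (d : ℕ) (C : (Fin d → ℝ) → ℝ) : Prop :=
  (∀ u : Fin d → ℝ, (∀ i, u i ∈ Set.Icc (0:ℝ) 1) → (∃ i, u i = 0) → C u = 0) ∧
  (∀ u : Fin d → ℝ, (∀ i, u i ∈ Set.Icc (0:ℝ) 1) →
    ∀ i : Fin d, (∀ j, j ≠ i → u j = 1) → C u = u i) ∧
  (∀ a b : Fin d → ℝ, (∀ i, a i ∈ Set.Icc (0:ℝ) 1) → (∀ i, b i ∈ Set.Icc (0:ℝ) 1) →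
    (∀ i, a i ≤ b i) →
    0 ≤ ∑ S : Finset (Fin d),
        (-1 : ℝ) ^ (d - S.card) * C (fun k => if k ∈ S then b k else a k))

open Finset Function

theorem Finset.sum_powerset_singleton {α M : Type*} [DecidableEq α] [AddCommMonoid M]
    (f : Finset α → M) (a : α) : ∑ t ∈ ({a} : Finset α).powerset, f t = f ∅ + f {a} := by
  rw [← insert_empty, sum_powerset_insert (notMem_empty a)]
  simp

theorem Finset.sum_powerset_pair {α M : Type*} [DecidableEq α] [AddCommMonoid M]
    (f : Finset α → M) {a b : α} (h : a ≠ b) :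
    ∑ t ∈ ({a, b} : Finset α).powerset, f t = f ∅ + f {b} + (f {a} + f {a, b}) := by
  rw [sum_powerset_insert (by simpa using h), sum_powerset_singleton, sum_powerset_singleton]
  simp

theorem sub_le_sum_of_piecewise_insert {ι α β : Type*} [Fintype ι] [DecidableEq ι]
    [AddCommGroup β] [PartialOrder β] [IsOrderedAddMonoid β] (φ : (ι → α) → β) (a b : ι → α)
    (ψ : ι → β) (h : ∀ (S : Finset ι) (j : ι), j ∉ S →
      φ ((insert j S).piecewise b a) - φ (S.piecewise b a) ≤ ψ j) :
    φ b - φ a ≤ ∑ j, ψ j := by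
  suffices ∀ S : Finset ι, φ (S.piecewise b a) - φ a ≤ ∑ j ∈ S, ψ j by simpa using this univ
  intro S
  induction S using Finset.induction_on with
  | empty => simp
  | insert j S hj ih =>
    rw [sum_insert hj, ← sub_add_sub_cancel _ (φ (S.piecewise b a))]
    exact add_le_add (h S j hj) ih

theorem sum_posPart_sub_comp_perm {ι β : Type*} [Fintype ι] [AddCommGroup β] [Lattice β]
    [IsOrderedAddMonoid β] (y : ι → β) (σ : Equiv.Perm ι) :
    ∑ i, (y (σ i) - y i)⁺ = ∑ i, (y i - y (σ i))⁺ := by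
  have h : ∑ i, ((y (σ i) - y i)⁺ - (y i - y (σ i))⁺) = 0 := by
    simp_rw [← neg_sub (y (σ _)), posPart_neg, posPart_sub_negPart, sum_sub_distrib,
      Equiv.sum_comp σ y, sub_self]
  rwa [sum_sub_distrib, sub_eq_zero] at h

namespace IsCopula

variable {d : ℕ} {C : (Fin d → ℝ) → ℝ}

theorem volume_eq_sum_powerset (hC : IsCopula d C) {a b : Fin d → ℝ}
    (ha : ∀ i, a i ∈ Set.Icc (0:ℝ) 1) (hb : ∀ i, b i ∈ Set.Icc (0:ℝ) 1)
    {T : Finset (Fin d)} (haT : ∀ k ∉ T, a k = 0) :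
    ∑ S : Finset (Fin d), (-1 : ℝ) ^ (d - #S) * C (S.piecewise b a) =
      ∑ R ∈ T.powerset, (-1 : ℝ) ^ (#T - #R) * C ((R ∪ Tᶜ).piecewise b a) := by
  have hvertex (S : Finset (Fin d)) (k : Fin d) : S.piecewise b a k ∈ Set.Icc (0:ℝ) 1 :=
    S.piecewise_cases _ _ _ (hb k) (ha k)
  -- a vertex not containing `Tᶜ` has a coordinate `a k = 0`, so `C` vanishes there
  calc _ = ∑ S with Tᶜ ⊆ S, (-1 : ℝ) ^ (d - #S) * C (S.piecewise b a) := by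
        refine (sum_filter_of_ne fun S _ hS k hk => ?_).symm
        by_contra hkS
        refine hS ?_
        rw [hC.1 _ (hvertex S) ⟨k, by simp [hkS, haT k (mem_compl.1 hk)]⟩, mul_zero]
    _ = ∑ R ∈ T.powerset, (-1 : ℝ) ^ (d - #(R ∪ Tᶜ)) * C ((R ∪ Tᶜ).piecewise b a) := by
        have hleft (S : Finset (Fin d)) (hS : Tᶜ ⊆ S) : S ∩ T ∪ Tᶜ = S := by
          ext k; have := @hS k; simp only [mem_union, mem_inter, mem_compl] at *; tauto
        have hright (R : Finset (Fin d)) (hR : R ⊆ T) : (R ∪ Tᶜ) ∩ T = R := by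
          ext k; have := @hR k; simp only [mem_union, mem_inter, mem_compl] at *; tauto
        refine sum_nbij' (· ∩ T) (· ∪ Tᶜ) (by simp) (by simp)
          (fun S hS => hleft S (mem_filter.1 hS).2) (fun R hR => hright R (mem_powerset.1 hR))
          (fun S hS => by rw [hleft S (mem_filter.1 hS).2])
    _ = _ := sum_congr rfl fun R hR => by
        have hRT := mem_powerset.1 hR
        rw [card_union_of_disjoint (disjoint_compl_right_iff.2 hRT), card_compl,
          Fintype.card_fin]
        have hR := card_le_card hRT
        have hT : #T ≤ d := (card_le_univ T).trans_eq (Fintype.card_fin d)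
        congr 2
        omega

theorem face_volume_nonneg (hC : IsCopula d C) {a b : Fin d → ℝ}
    (ha : ∀ i, a i ∈ Set.Icc (0:ℝ) 1) (hb : ∀ i, b i ∈ Set.Icc (0:ℝ) 1) (hab : ∀ i, a i ≤ b i)
    {T : Finset (Fin d)} (haT : ∀ k ∉ T, a k = 0) :
    0 ≤ ∑ R ∈ T.powerset, (-1 : ℝ) ^ (#T - #R) * C ((R ∪ Tᶜ).piecewise b a) :=
  hC.volume_eq_sum_powerset ha hb haT ▸ hC.2.2 a b ha hb hab

theorem update_le (hC : IsCopula d C) {x : Fin d → ℝ} (hx : ∀ i, x i ∈ Set.Icc (0:ℝ) 1)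
    (i : Fin d) {c : ℝ} (hc0 : 0 ≤ c) (hc : c ≤ x i) : C (update x i c) ≤ C x := by
  set a : Fin d → ℝ := update 0 i c
  have ha (k : Fin d) : a k ∈ Set.Icc (0:ℝ) 1 := by
    rcases eq_or_ne k i with rfl | hk
    · simpa [a] using ⟨hc0, hc.trans (hx k).2⟩
    · simp [a, hk]
  have hab (k : Fin d) : a k ≤ x k := by
    rcases eq_or_ne k i with rfl | hk
    · simpa [a] using hc
    · simpa [a, hk] using (hx k).1
  have hv0 : (∅ ∪ {i}ᶜ : Finset (Fin d)).piecewise x a = update x i c := by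
    ext k; rcases eq_or_ne k i with rfl | hk <;> simp [a, *]
  have hv1 : ({i} ∪ {i}ᶜ : Finset (Fin d)).piecewise x a = x := by
    ext k; simp
  have := hC.face_volume_nonneg ha hx hab (T := {i}) (fun k hk => by simp_all [a])
  rw [sum_powerset_singleton, hv0, hv1] at this
  simpa using this

theorem update_sub_le_update_update_sub (hC : IsCopula d C) {x : Fin d → ℝ}
    (hx : ∀ i, x i ∈ Set.Icc (0:ℝ) 1) {i j : Fin d} (hij : i ≠ j) {w y : ℝ}
    (hw : x i ≤ w) (hw1 : w ≤ 1) (hy : x j ≤ y) (hy1 : y ≤ 1) :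
    C (update x i w) - C x ≤ C (update (update x j y) i w) - C (update x j y) := by
  set T : Finset (Fin d) := {i, j}
  set a : Fin d → ℝ := T.piecewise x 0
  set b : Fin d → ℝ := update (update x j y) i w
  have hcases (k : Fin d) : k = i ∨ k = j ∨ (k ≠ i ∧ k ≠ j) := by tauto
  have ha (k : Fin d) : a k ∈ Set.Icc (0:ℝ) 1 := by
    rcases hcases k with rfl | rfl | ⟨hki, hkj⟩ <;> simp [a, T, *]
  have hb (k : Fin d) : b k ∈ Set.Icc (0:ℝ) 1 := by
    rcases hcases k with rfl | rfl | ⟨hki, hkj⟩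
    · simpa [b] using ⟨(hx k).1.trans hw, hw1⟩
    · simpa [b, hij.symm] using ⟨(hx k).1.trans hy, hy1⟩
    · simpa [b, hki, hkj] using hx k
  have hab (k : Fin d) : a k ≤ b k := by
    rcases hcases k with rfl | rfl | ⟨hki, hkj⟩
    · simpa [a, b, T] using hw
    · simpa [a, b, T, hij.symm] using hy
    · simpa [a, b, T, hki, hkj] using (hx k).1
  have hvertex (R : Finset (Fin d)) (v : Fin d → ℝ) (hv : ∀ k, (R ∪ Tᶜ).piecewise b a k = v k) :
      (R ∪ Tᶜ).piecewise b a = v := funext hv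
  have := hC.face_volume_nonneg ha hb hab (T := T) (fun k hk => by simp_all [a])
  rw [sum_powerset_pair _ hij, hvertex ∅ x, hvertex {i} (update x i w), hvertex {j} (update x j y),
    hvertex T b] at this
  · simp only [T, card_pair hij, card_empty, card_singleton, tsub_zero, tsub_self,
      Nat.add_one_sub_one, even_two, Even.neg_pow, one_pow, one_mul, pow_one, pow_zero, neg_mul] at this
    linarith
  all_goals intro k; rcases hcases k with rfl | rfl | ⟨hki, hkj⟩ <;> simp [a, b, T, hij.symm, *]

theorem update_sub_le (hC : IsCopula d C) {x : Fin d → ℝ} (hx : ∀ i, x i ∈ Set.Icc (0:ℝ) 1)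
    (i : Fin d) {w : ℝ} (hw : x i ≤ w) (hw1 : w ≤ 1) : C (update x i w) - C x ≤ w - x i := by
  set y : Fin d → ℝ := update (fun _ => 1) i (x i)
  have hy (k : Fin d) : y k ∈ Set.Icc (0:ℝ) 1 := by
    rcases eq_or_ne k i with rfl | hk
    · simpa [y] using hx k
    · simp [y, hk]
  have hmargin {v : Fin d → ℝ} (hv : ∀ k, v k ∈ Set.Icc (0:ℝ) 1) (hv1 : ∀ k ≠ i, v k = 1) :
      C v = v i :=
    hC.2.1 v hv i hv1
  -- raising the other coordinates to `1` only increases the `i`-increment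
  have hincr : C (update x i w) - C x ≤ C (update y i w) - C y := by
    have := sub_le_sum_of_piecewise_insert (fun z => C z - C (update z i w)) x y 0 fun S j hj => ?_
    · simp only [Pi.zero_apply, sum_const_zero] at this
      linarith
    have hz (k : Fin d) : S.piecewise y x k ∈ Set.Icc (0:ℝ) 1 :=
      S.piecewise_cases _ _ _ (hy k) (hx k)
    have hzi : S.piecewise y x i = x i := by
      by_cases hi : i ∈ S <;> simp [hi, y]
    rw [piecewise_insert]
    rcases eq_or_ne j i with rfl | hji
    · rw [show y j = S.piecewise y x j by simp [y, hzi], update_eq_self, sub_self, Pi.zero_apply]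
    · have := hC.update_sub_le_update_update_sub hz hji.symm (hzi ▸ hw) hw1 (hz j).2 le_rfl
      simp only [y, update_of_ne hji, Pi.zero_apply]
      linarith
  rw [hmargin hy (fun k hk => by simp [y, hk]),
    hmargin (v := update y i w) (fun k => ?_) (fun k hk => by simp [y, hk])] at hincr
  · simpa [y] using hincr
  · rcases eq_or_ne k i with rfl | hk
    · simpa using ⟨(hx k).1.trans hw, hw1⟩
    · simp [y, hk]

theorem mono (hC : IsCopula d C) {a b : Fin d → ℝ} (ha : ∀ i, a i ∈ Set.Icc (0:ℝ) 1)
    (hb : ∀ i, b i ∈ Set.Icc (0:ℝ) 1) (hab : ∀ i, a i ≤ b i) : C a ≤ C b := by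
  have := sub_le_sum_of_piecewise_insert (fun z => -C z) a b 0 fun S j hj => ?_
  · simp only [Pi.zero_apply, sum_const_zero] at this
    linarith
  have hz (k : Fin d) : S.piecewise b a k ∈ Set.Icc (0:ℝ) 1 :=
    S.piecewise_cases _ _ _ (hb k) (ha k)
  have hzj : S.piecewise b a j = a j := S.piecewise_eq_of_notMem _ _ hj
  have := hC.update_le (x := update (S.piecewise b a) j (b j)) (fun k => ?_) j (ha j).1
    (by simpa using hab j)
  · rw [update_idem, ← hzj, update_eq_self] at this
    rw [piecewise_insert, Pi.zero_apply]
    linarith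
  · rcases eq_or_ne k j with rfl | hk
    · simpa using hb k
    · simpa [hk] using hz k

theorem sub_le_sum_sub (hC : IsCopula d C) {a b : Fin d → ℝ} (ha : ∀ i, a i ∈ Set.Icc (0:ℝ) 1)
    (hb : ∀ i, b i ∈ Set.Icc (0:ℝ) 1) (hab : ∀ i, a i ≤ b i) :
    C b - C a ≤ ∑ i, (b i - a i) := by
  refine sub_le_sum_of_piecewise_insert C a b (b - a) fun S j hj => ?_
  have hz (k : Fin d) : S.piecewise b a k ∈ Set.Icc (0:ℝ) 1 :=
    S.piecewise_cases _ _ _ (hb k) (ha k)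
  have hzj : S.piecewise b a j = a j := S.piecewise_eq_of_notMem _ _ hj
  rw [piecewise_insert, Pi.sub_apply, ← hzj]
  exact hC.update_sub_le hz j (hzj ▸ hab j) (hb j).2

theorem sub_le_sum_posPart (hC : IsCopula d C) {x y : Fin d → ℝ}
    (hx : ∀ i, x i ∈ Set.Icc (0:ℝ) 1) (hy : ∀ i, y i ∈ Set.Icc (0:ℝ) 1) :
    C x - C y ≤ ∑ i, (x i - y i)⁺ := by
  have hxy (i : Fin d) : (x ⊓ y) i ∈ Set.Icc (0:ℝ) 1 :=
    ⟨le_inf (hx i).1 (hy i).1, inf_le_left.trans (hx i).2⟩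
  calc C x - C y ≤ C x - C (x ⊓ y) := sub_le_sub_left (hC.mono hxy hy fun i => inf_le_right) _
    _ ≤ ∑ i, (x i - (x ⊓ y) i) := hC.sub_le_sum_sub hxy hx fun i => inf_le_left
    _ = ∑ i, (x i - y i)⁺ := sum_congr rfl fun i _ => by
      rcases le_total (x i) (y i) with h | h <;> simp [h]

theorem abs_sub_comp_perm_le (hC : IsCopula d C) {u : Fin d → ℝ}
    (hu : ∀ i, u i ∈ Set.Icc (0:ℝ) 1) (π : Equiv.Perm (Fin d)) :
    |C u - C (u ∘ π)| ≤ ∑ i, (u i - u (π i))⁺ := by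
  have huπ (i : Fin d) : (u ∘ π) i ∈ Set.Icc (0:ℝ) 1 := hu (π i)
  refine abs_sub_le_iff.2 ⟨hC.sub_le_sum_posPart hu huπ, ?_⟩
  rw [← sum_posPart_sub_comp_perm]
  exact hC.sub_le_sum_posPart huπ hu

end IsCopula

theorem sum_posPart_sub_le_sum_filter {ι : Type*} [Fintype ι] (f g : ι → ℝ) (hg : ∀ i, 0 ≤ g i) :
    ∑ i, (f i - g i)⁺ ≤ ∑ i with g i < f i, f i := by
  rw [sum_filter]
  refine sum_le_sum fun i _ => ?_
  split_ifs with h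
  · rw [posPart_eq_self.2 (sub_nonneg.2 h.le)]
    linarith [hg i]
  · rw [posPart_eq_zero.2 (sub_nonpos.2 (not_lt.1 h))]

theorem Finset.sum_le_sum_of_card_le_of_forall_sdiff_le {ι : Type*} [DecidableEq ι]
    {Q T : Finset ι} (f : ι → ℝ) (hf : ∀ i, 0 ≤ f i) (hcard : #Q ≤ #T)
    (hQT : ∀ a ∈ Q \ T, ∀ b ∈ T \ Q, f a ≤ f b) :
    ∑ i ∈ Q, f i ≤ ∑ i ∈ T, f i := by
  rw [← sum_inter_add_sum_sdiff Q T, ← sum_inter_add_sum_sdiff T Q, inter_comm]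
  refine add_le_add le_rfl ?_
  rcases (Q \ T).eq_empty_or_nonempty with hQ | hQ
  · rw [hQ, sum_empty]
    exact sum_nonneg fun i _ => hf i
  have hcard' : #(Q \ T) ≤ #(T \ Q) := by
    have := card_sdiff_add_card_inter Q T
    have := card_sdiff_add_card_inter T Q
    rw [inter_comm] at this
    omega
  set t := (Q \ T).sup' hQ f
  calc ∑ i ∈ Q \ T, f i ≤ #(Q \ T) • t := sum_le_card_nsmul _ _ _ fun a ha => le_sup' f ha
    _ ≤ #(T \ Q) • t := nsmul_le_nsmul_left ((hf _).trans (le_sup' f hQ.choose_spec)) hcard'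
    _ ≤ ∑ i ∈ T \ Q, f i :=
      card_nsmul_le_sum _ _ _ fun b hb => sup'_le _ _ fun a ha => hQT a ha b hb

theorem Fin.sum_le_sum_filter_le_of_card_le {p : ℕ} (m : ℕ) (f : Fin p → ℝ) (hf : Monotone f)
    (hf0 : ∀ i, 0 ≤ f i) {Q : Finset (Fin p)} (hQ : #Q ≤ p - m) :
    ∑ i ∈ Q, f i ≤ ∑ i ∈ univ.filter (fun i : Fin p => m ≤ (i : ℕ)), f i := by
  refine sum_le_sum_of_card_le_of_forall_sdiff_le f hf0 ?_ fun a ha b hb => hf ?_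
  · have := card_filter_add_card_filter_not (s := univ) fun i : Fin p => (i : ℕ) < m
    simp only [Fin.card_filter_val_lt, not_lt, card_univ, Fintype.card_fin] at this
    omega
  · simp only [mem_sdiff, mem_filter, mem_univ, true_and] at ha hb
    exact Fin.le_def.2 (by omega)

theorem sum_posPart_sub_comp_perm_le {p : ℕ} (hp : 0 < p) (x : Fin p → ℝ) (hx : Monotone x)
    (σ : Equiv.Perm (Fin p)) :
    ∑ i, (x i - x (σ i))⁺ ≤
      ∑ i ∈ univ.filter (fun i : Fin p => (p + 1) / 2 ≤ (i : ℕ)), (x i - x ⟨0, hp⟩) := by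
  set f : Fin p → ℝ := fun i => x i - x ⟨0, hp⟩
  have hf : Monotone f := fun a b hab => sub_le_sub_right (hx hab) _
  have hf0 (i : Fin p) : 0 ≤ f i := sub_nonneg.2 (hx (Fin.le_def.2 (Nat.zero_le i)))
  have hshift (i : Fin p) : x i - x (σ i) = f i - f (σ i) := (sub_sub_sub_cancel_right _ _ _).symm
  simp_rw [hshift]
  have hA : ∑ i, (f i - f (σ i))⁺ ≤ ∑ i with f (σ i) < f i, f i :=
    sum_posPart_sub_le_sum_filter _ _ fun i => hf0 (σ i)
  have hB : ∑ i, (f (σ i) - f i)⁺ ≤ ∑ i with f i < f (σ i), f (σ i) :=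
    sum_posPart_sub_le_sum_filter _ _ hf0
  rw [sum_posPart_sub_comp_perm] at hB
  replace hB := hB.trans_eq (sum_map _ σ.toEmbedding f).symm
  have hcard : #{i | f (σ i) < f i} + #{i | f i < f (σ i)} ≤ p := by
    rw [← card_union_of_disjoint (disjoint_filter.2 fun i _ h h' => h.not_gt h')]
    exact (card_le_univ _).trans_eq (Fintype.card_fin p)
  rcases le_or_gt #{i | f (σ i) < f i} (p / 2) with h | h
  · exact hA.trans (Fin.sum_le_sum_filter_le_of_card_le _ f hf hf0 (by omega))
  · exact hB.trans (Fin.sum_le_sum_filter_le_of_card_le _ f hf hf0 (by rw [card_map]; omega))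

theorem Equiv.Perm.exists_sum_posPart_sub_eq_sum_orderIsoOfFin {ι : Type*} [Fintype ι]
    [LinearOrder ι] (u : ι → ℝ) (π : Equiv.Perm ι) {p : ℕ} (hp : #π.support = p) :
    ∃ σ : Equiv.Perm (Fin p), ∑ i, (u i - u (π i))⁺ =
      ∑ j, (u (π.support.orderIsoOfFin hp j) - u (π.support.orderIsoOfFin hp (σ j)))⁺ := by
  set e := (π.support.orderIsoOfFin hp).toEquiv
  set τ : Equiv.Perm π.support := π.subtypePerm fun _ => Equiv.Perm.apply_mem_support
  refine ⟨(e.trans τ).trans e.symm, ?_⟩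
  calc ∑ i, (u i - u (π i))⁺ = ∑ i ∈ π.support, (u i - u (π i))⁺ :=
        (sum_subset (subset_univ _) fun i _ hi => by simp [Equiv.Perm.notMem_support.1 hi]).symm
    _ = ∑ i : π.support, (u i - u (π i))⁺ := (sum_coe_sort _ _).symm
    _ = ∑ j, (u (e j) - u (π (e j)))⁺ := (e.sum_comp fun i : π.support => (u i - u (π i))⁺).symm
    _ = _ := by simp [e, τ]

/-- Indices are `0`-based: `s.orderIsoOfFin hp k` is `i_{k+1}`, and `⌈p/2⌉ = (p + 1) / 2`. -/
theorem improved_bound_nonfixed (d : ℕ)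
    (u : Fin d → ℝ) (hu : ∀ i, u i ∈ Set.Icc (0:ℝ) 1)
    (hmono : ∀ i j : Fin d, i ≤ j → u i ≤ u j)
    (C : (Fin d → ℝ) → ℝ) (hC : IsCopula d C)
    (π : Equiv.Perm (Fin d))
    (s : Finset (Fin d)) (hs : s = Finset.univ.filter (fun i => π i ≠ i))
    (p : ℕ) (hp : s.card = p) (hp2 : 2 ≤ p) :
    |C u - C (u ∘ π)| ≤
      ∑ k ∈ Finset.univ.filter (fun k : Fin p => (p + 1) / 2 ≤ (k : ℕ)),
        (u (s.orderIsoOfFin hp k) - u (s.orderIsoOfFin hp ⟨0, by omega⟩)) := by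
  subst hs
  obtain ⟨σ, hσ⟩ := π.exists_sum_posPart_sub_eq_sum_orderIsoOfFin u hp
  calc |C u - C (u ∘ π)| ≤ ∑ i, (u i - u (π i))⁺ := hC.abs_sub_comp_perm_le hu π
    _ = _ := hσ
    _ ≤ _ := sum_posPart_sub_comp_perm_le (by omega) _
      (fun a b hab => hmono _ _ ((π.support.orderIsoOfFin hp).monotone hab)) σ
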